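/- arXiv:1610.04580 — 4 statements merged into one kernel-verified Lean document; each statement's English description precedes it below -/
import Mathlib

section
/- Let $H = Gb_* + \varepsilon$ with $G \in \mathbb{R}^{n\times p}$, and suppose: (i) $\|n^{-1}G^\top \varepsilon\|_\infty \leq \eta\sigma_*$; (ii) a vector $\hat{b}$ satisfies $\|\hat{b}\|_1 \leq \|b_*\|_1$ and $\|n^{-1}G^\top(H - G\hat{b})\|_\infty \leq \eta\tilde\sigma$ with $\tilde\sigma \geq \sigma_* > 0$; (iii) the restricted eigenvalue condition holds: for $J = \mathrm{supp}(b_*)$ with $|J| = s$, every $a \neq 0$ with $\|a_{J^c}\|_1 \leq \|a_J\|_1$ satisfies $\|Ga\|_2^2 \geq n\kappa\|a_J\|_2^2$. Then the error $\delta = \hat{b} - b_*$ satisfies $\|\delta_{J^c}\|_1 \leq \|\delta_J\|_1$, $\|\delta_J\|_2 \leq 2\sqrt{s}\,\eta(\tilde\sigma + \sigma_*)/\kappa$, and $n^{-1}\|G\delta\|_2^2 \leq 4s\eta^2(\tilde\sigma + \sigma_*)^2/\kappa$. -/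
/-!
The error `δ = b̂ - b_*` lies in the cone `‖δ_{Jᶜ}‖₁ ≤ ‖δ_J‖₁`, since `b_*` vanishes off `J` and
`‖b̂‖₁ ≤ ‖b_*‖₁`. As `Gδ = ε - (H - G b̂)`, the two correlation bounds give
`‖n⁻¹ GᵀGδ‖∞ ≤ λ := η (σ̃ + σ_*)`, hence
`n⁻¹ ‖Gδ‖₂² = ⟪n⁻¹ GᵀGδ, δ⟫ ≤ λ ‖δ‖₁ ≤ 2λ ‖δ_J‖₁ ≤ 2λ √s ‖δ_J‖₂`.
The restricted eigenvalue condition bounds the left side below by `κ ‖δ_J‖₂²`, and comparing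
the two bounds gives `‖δ_J‖₂ ≤ 2 √s λ / κ`, then the prediction bound.
-/

open Finset Matrix

lemma Matrix.sum_mulVec_sq_eq_dotProduct {R m ι : Type*} [CommSemiring R] [Fintype m]
    [Fintype ι] (G : Matrix m ι R) (v : ι → R) :
    ∑ i, (G *ᵥ v) i ^ 2 = (Gᵀ *ᵥ (G *ᵥ v)) ⬝ᵥ v := by
  rw [mulVec_transpose, ← dotProduct_mulVec]
  simp only [dotProduct, sq]

lemma dotProduct_le_norm_mul_sum_abs {ι : Type*} [Fintype ι] (a v : ι → ℝ) :
    a ⬝ᵥ v ≤ ‖a‖ * ∑ i, |v i| := by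
  rw [mul_sum]
  refine sum_le_sum fun i _ => ?_
  calc a i * v i ≤ |a i| * |v i| := by rw [← abs_mul]; exact le_abs_self _
    _ ≤ ‖a‖ * |v i| := by
      gcongr
      exact norm_le_pi_norm a i

lemma sum_abs_le_sqrt_card_mul_sqrt_sum_sq {ι : Type*} (s : Finset ι) (v : ι → ℝ) :
    ∑ i ∈ s, |v i| ≤ √(#s : ℝ) * √(∑ i ∈ s, v i ^ 2) := by
  rw [← Real.sqrt_mul (Nat.cast_nonneg _)]
  refine Real.le_sqrt_of_sq_le ?_
  simpa only [sq_abs] using sq_sum_le_card_mul_sum_sq (s := s) (f := fun i => |v i|)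

lemma le_div_of_mul_sq_le_mul {κ c t : ℝ} (hκ : 0 < κ) (hc : 0 ≤ c) (ht : 0 ≤ t)
    (h : κ * t ^ 2 ≤ c * t) : t ≤ c / κ := by
  rw [le_div_iff₀ hκ]
  rcases ht.eq_or_lt with rfl | ht
  · simpa using hc
  · nlinarith

lemma sum_abs_sub_compl_le_sum_abs_sub {ι : Type*} [Fintype ι] [DecidableEq ι] {J : Finset ι}
    {b b' : ι → ℝ} (hb : ∀ i ∉ J, b i = 0) (hl1 : ∑ i, |b' i| ≤ ∑ i, |b i|) :
    ∑ i ∈ Jᶜ, |b' i - b i| ≤ ∑ i ∈ J, |b' i - b i| := by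
  have hcompl : ∑ i ∈ Jᶜ, |b' i - b i| = ∑ i ∈ Jᶜ, |b' i| :=
    sum_congr rfl fun i hi => by rw [hb i (mem_compl.mp hi), sub_zero]
  have hb_compl : ∑ i ∈ Jᶜ, |b i| = 0 :=
    sum_eq_zero fun i hi => by rw [hb i (mem_compl.mp hi), abs_zero]
  have hJ : ∑ i ∈ J, (|b i| - |b' i|) ≤ ∑ i ∈ J, |b' i - b i| :=
    sum_le_sum fun i _ => by
      simpa only [abs_sub_comm (b' i)] using abs_sub_abs_le_abs_sub (b i) (b' i)
  rw [sum_sub_distrib] at hJ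
  have := sum_add_sum_compl J fun i => |b' i|
  have := sum_add_sum_compl J fun i => |b i|
  linarith

theorem restrictedEigenvalue_error_bound {m ι : Type*} [Fintype m] [Fintype ι]
    [DecidableEq ι] (G : Matrix m ι ℝ) (δ : ι → ℝ) (J : Finset ι) {N κ c : ℝ}
    (hN : 0 < N) (hκ : 0 < κ)
    (hcone : ∑ i ∈ Jᶜ, |δ i| ≤ ∑ i ∈ J, |δ i|)
    (hRE : N * κ * ∑ i ∈ J, δ i ^ 2 ≤ ∑ i, (G *ᵥ δ) i ^ 2)
    (hcorr : ‖N⁻¹ • Gᵀ *ᵥ (G *ᵥ δ)‖ ≤ c) :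
    √(∑ i ∈ J, δ i ^ 2) ≤ 2 * √(#J : ℝ) * c / κ ∧
      N⁻¹ * ∑ i, (G *ᵥ δ) i ^ 2 ≤ 4 * #J * c ^ 2 / κ := by
  set T := √(∑ i ∈ J, δ i ^ 2)
  have hc : 0 ≤ c := (norm_nonneg _).trans hcorr
  have hT : T ^ 2 = ∑ i ∈ J, δ i ^ 2 := Real.sq_sqrt (sum_nonneg fun i _ => sq_nonneg _)
  have hupper : N⁻¹ * ∑ i, (G *ᵥ δ) i ^ 2 ≤ 2 * √(#J : ℝ) * c * T := calc
    N⁻¹ * ∑ i, (G *ᵥ δ) i ^ 2 = (N⁻¹ • Gᵀ *ᵥ (G *ᵥ δ)) ⬝ᵥ δ := by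
      rw [sum_mulVec_sq_eq_dotProduct, smul_dotProduct, smul_eq_mul]
    _ ≤ c * ∑ i, |δ i| :=
      (dotProduct_le_norm_mul_sum_abs _ _).trans (by gcongr)
    _ ≤ c * (2 * ∑ i ∈ J, |δ i|) := by
      rw [← sum_add_sum_compl J]
      gcongr
      linarith
    _ ≤ c * (2 * (√(#J : ℝ) * T)) := by
      gcongr
      exact sum_abs_le_sqrt_card_mul_sqrt_sum_sq J δ
    _ = 2 * √(#J : ℝ) * c * T := by ring
  have hlower : κ * T ^ 2 ≤ N⁻¹ * ∑ i, (G *ᵥ δ) i ^ 2 := by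
    rw [hT, le_inv_mul_iff₀ hN, ← mul_assoc]
    exact hRE
  have hTbound : T ≤ 2 * √(#J : ℝ) * c / κ :=
    le_div_of_mul_sq_le_mul hκ (by positivity) (Real.sqrt_nonneg _) (hlower.trans hupper)
  refine ⟨hTbound, hupper.trans ?_⟩
  calc 2 * √(#J : ℝ) * c * T ≤ 2 * √(#J : ℝ) * c * (2 * √(#J : ℝ) * c / κ) := by
        gcongr
    _ = 4 * (√(#J : ℝ)) ^ 2 * c ^ 2 / κ := by ring
    _ = 4 * #J * c ^ 2 / κ := by rw [Real.sq_sqrt (Nat.cast_nonneg _)]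

theorem stmt9_general {n p : ℕ} (hn : 0 < n)
    (G : Matrix (Fin n) (Fin p) ℝ) (bstar bhat : Fin p → ℝ) (ε : Fin n → ℝ)
    (H : Fin n → ℝ) (hH : H = G.mulVec bstar + ε)
    (η κ σstar σtilde : ℝ) (hκ : 0 < κ)
    (J : Finset (Fin p)) (hJ : ∀ i, i ∈ J ↔ bstar i ≠ 0)
    (hnoise : ‖(n : ℝ)⁻¹ • G.transpose.mulVec ε‖ ≤ η * σstar)
    (hl1 : (∑ i, |bhat i|) ≤ ∑ i, |bstar i|)
    (hfeas : ‖(n : ℝ)⁻¹ • G.transpose.mulVec (H - G.mulVec bhat)‖ ≤ η * σtilde)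
    (hRE : ∀ a : Fin p → ℝ, a ≠ 0 → (∑ i ∈ Jᶜ, |a i|) ≤ (∑ i ∈ J, |a i|) →
      (n : ℝ) * κ * (∑ i ∈ J, (a i) ^ 2) ≤ ∑ i, (G.mulVec a i) ^ 2) :
    (∑ i ∈ Jᶜ, |bhat i - bstar i|) ≤ (∑ i ∈ J, |bhat i - bstar i|) ∧
      Real.sqrt (∑ i ∈ J, (bhat i - bstar i) ^ 2) ≤
        2 * Real.sqrt (J.card) * η * (σtilde + σstar) / κ ∧
      (n : ℝ)⁻¹ * (∑ i, (G.mulVec (bhat - bstar) i) ^ 2) ≤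
        4 * (J.card : ℝ) * η ^ 2 * (σtilde + σstar) ^ 2 / κ := by
  set δ := bhat - bstar
  have hcone : ∑ i ∈ Jᶜ, |δ i| ≤ ∑ i ∈ J, |δ i| :=
    sum_abs_sub_compl_le_sum_abs_sub (fun i hi => not_not.mp (mt (hJ i).mpr hi)) hl1
  have hREδ : (n : ℝ) * κ * ∑ i ∈ J, δ i ^ 2 ≤ ∑ i, (G *ᵥ δ) i ^ 2 := by
    by_cases hδ : δ = 0
    · simp [hδ]
    · exact hRE δ hδ hcone
  have hGδ : G *ᵥ δ = ε - (H - G *ᵥ bhat) := by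
    rw [hH, mulVec_sub]
    abel
  have hcorr : ‖(n : ℝ)⁻¹ • Gᵀ *ᵥ (G *ᵥ δ)‖ ≤ η * (σtilde + σstar) := by
    rw [hGδ, mulVec_sub, smul_sub, mul_add]
    exact (norm_sub_le _ _).trans (by linarith)
  obtain ⟨hℓ2, hpred⟩ :=
    restrictedEigenvalue_error_bound G δ J (Nat.cast_pos.mpr hn) hκ hcone hREδ hcorr
  refine ⟨hcone, ?_, ?_⟩
  · exact hℓ2.trans_eq (by ring)
  · exact hpred.trans_eq (by ring)

/-- Core error bound for the Dantzig-type estimator: if `H = G b_* + ε`,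
`‖n⁻¹ Gᵀ ε‖∞ ≤ η σ_*`, `b̂` satisfies `‖b̂‖₁ ≤ ‖b_*‖₁` and
`‖n⁻¹ Gᵀ (H - G b̂)‖∞ ≤ η σ̃` with `σ̃ ≥ σ_* > 0`, and the restricted eigenvalue
condition holds on `J = supp(b_*)`, then for `δ = b̂ - b_*`:
`‖δ_{Jᶜ}‖₁ ≤ ‖δ_J‖₁`, `‖δ_J‖₂ ≤ 2 √s η (σ̃ + σ_*)/κ`, and
`n⁻¹ ‖G δ‖₂² ≤ 4 s η² (σ̃ + σ_*)²/κ`. -/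
theorem stmt9 {n p : ℕ} (hn : 0 < n)
    (G : Matrix (Fin n) (Fin p) ℝ) (bstar bhat : Fin p → ℝ) (ε : Fin n → ℝ)
    (H : Fin n → ℝ) (hH : H = G.mulVec bstar + ε)
    (η κ σstar σtilde : ℝ) (hη : 0 < η) (hκ : 0 < κ) (hσstar : 0 < σstar)
    (hσtilde : σstar ≤ σtilde)
    (J : Finset (Fin p)) (hJ : ∀ i, i ∈ J ↔ bstar i ≠ 0)
    (hnoise : ‖(n : ℝ)⁻¹ • G.transpose.mulVec ε‖ ≤ η * σstar)
    (hl1 : (∑ i, |bhat i|) ≤ ∑ i, |bstar i|)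
    (hfeas : ‖(n : ℝ)⁻¹ • G.transpose.mulVec (H - G.mulVec bhat)‖ ≤ η * σtilde)
    (hRE : ∀ a : Fin p → ℝ, a ≠ 0 → (∑ i ∈ Jᶜ, |a i|) ≤ (∑ i ∈ J, |a i|) →
      (n : ℝ) * κ * (∑ i ∈ J, (a i) ^ 2) ≤ ∑ i, (G.mulVec a i) ^ 2) :
    (∑ i ∈ Jᶜ, |bhat i - bstar i|) ≤ (∑ i ∈ J, |bhat i - bstar i|) ∧
      Real.sqrt (∑ i ∈ J, (bhat i - bstar i) ^ 2) ≤
        2 * Real.sqrt (J.card) * η * (σtilde + σstar) / κ ∧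
      (n : ℝ)⁻¹ * (∑ i, (G.mulVec (bhat - bstar) i) ^ 2) ≤
        4 * (J.card : ℝ) * η ^ 2 * (σtilde + σstar) ^ 2 / κ :=
  stmt9_general hn G bstar bhat ε H hH η κ σstar σtilde hκ J hJ hnoise hl1 hfeas hRE
end

section
/- Under the ADDS assumptions—(i) $\|n^{-1}G^\top\varepsilon\|_\infty \leq \eta\sigma_*$, (ii) $3\sigma_*^2/4 \leq n^{-1}\|\varepsilon\|_2^2 \leq 2\sigma_*^2$, (iv) $28\eta\sqrt{s/\kappa} \leq 1$ where $s = \|b_*\|_0$, and (v) the restricted eigenvalue condition with constant $\kappa$—the quantity $\tilde\sigma$ defined as the largest $\sigma \geq 0$ with $\|H - G\hat{b}(\sigma)\|_2^2 \geq n\sigma^2/2$ (where $\hat{b}(\sigma)$ minimizes $\|b\|_1$ subject to $\|n^{-1}G^\top(H-Gb)\|_\infty \leq \eta\sigma$) satisfies $\sigma_* \leq \tilde\sigma \leq 3\sigma_*$. -/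
set_option maxHeartbeats 4000000


/-- Under the ADDS assumptions, the adaptively chosen scale `σ̃` satisfies `σ_* ≤ σ̃ ≤ 3 σ_*`. -/
theorem stmt10 {n p : ℕ} (hn : 0 < n)
    (G : Matrix (Fin n) (Fin p) ℝ) (bstar : Fin p → ℝ) (ε : Fin n → ℝ)
    (H : Fin n → ℝ) (hH : H = G.mulVec bstar + ε)
    (η κ σstar : ℝ) (hη : 0 < η) (hκ : 0 < κ) (hσstar : 0 < σstar)
    (J : Finset (Fin p)) (hJ : ∀ i, i ∈ J ↔ bstar i ≠ 0)
    -- (i) bound on the noise correlation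
    (hnoise : ‖(n : ℝ)⁻¹ • G.transpose.mulVec ε‖ ≤ η * σstar)
    -- (ii) the noise scale is proxied by σstar
    (hnoise2 : 3 * σstar ^ 2 / 4 ≤ (n : ℝ)⁻¹ * (∑ i, (ε i) ^ 2) ∧
      (n : ℝ)⁻¹ * (∑ i, (ε i) ^ 2) ≤ 2 * σstar ^ 2)
    -- (iv) sparsity condition: 28 η √(s/κ) ≤ 1 with s = ‖bstar‖₀
    (hsparse : 28 * η * Real.sqrt ((J.card : ℝ) / κ) ≤ 1)
    -- (v) restricted eigenvalue condition with constant κ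
    (hRE : ∀ J0 : Finset (Fin p), J0.card ≤ J.card →
      ∀ a : Fin p → ℝ, a ≠ 0 → (∑ i ∈ J0ᶜ, |a i|) ≤ (∑ i ∈ J0, |a i|) →
        (n : ℝ) * κ * (∑ i ∈ J0, (a i) ^ 2) ≤ ∑ i, (G.mulVec a i) ^ 2)
    -- the Dantzig-type solution path: bhat σ minimizes ‖b‖₁ subject to
    -- ‖n⁻¹ Gᵀ (H - G b)‖∞ ≤ η σ
    (bhat : ℝ → Fin p → ℝ)
    (hbhat : ∀ σ : ℝ, 0 ≤ σ →
      ‖(n : ℝ)⁻¹ • G.transpose.mulVec (H - G.mulVec (bhat σ))‖ ≤ η * σ ∧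
        ∀ b : Fin p → ℝ, ‖(n : ℝ)⁻¹ • G.transpose.mulVec (H - G.mulVec b)‖ ≤ η * σ →
          (∑ i, |bhat σ i|) ≤ ∑ i, |b i|)
    -- σtilde is the largest σ ≥ 0 with ‖H - G (bhat σ)‖₂² ≥ n σ²/2
    (σtilde : ℝ) (hσtilde0 : 0 ≤ σtilde)
    (hσtilde1 : (n : ℝ) * σtilde ^ 2 / 2 ≤ ∑ i, (H i - G.mulVec (bhat σtilde) i) ^ 2)
    (hσtilde2 : ∀ σ : ℝ, 0 ≤ σ →
      (n : ℝ) * σ ^ 2 / 2 ≤ (∑ i, (H i - G.mulVec (bhat σ) i) ^ 2) → σ ≤ σtilde) :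
    σstar ≤ σtilde ∧ σtilde ≤ 3 * σstar := by
  have hn0 : (0 : ℝ) < n := by exact_mod_cast hn
  set s : ℝ := (J.card : ℝ) with hs
  have hs0 : 0 ≤ s := by positivity
  -- sparsity condition, squared and clear of division: 784 η² s ≤ κ
  have hsp : 784 * η ^ 2 * s ≤ κ := by
    have h1 : (0:ℝ) ≤ s / κ := by positivity
    have h2 : Real.sqrt (s / κ) ^ 2 = s / κ := Real.sq_sqrt h1
    have h3 : 0 ≤ 28 * η * Real.sqrt (s / κ) := by positivity
    have h4 : (28 * η * Real.sqrt (s / κ)) ^ 2 ≤ 1 := by nlinarith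
    have h5 : 784 * η ^ 2 * (s / κ) ≤ 1 := by nlinarith [Real.sqrt_nonneg (s/κ)]
    have h6 : 784 * η ^ 2 * (s / κ) * κ ≤ 1 * κ := mul_le_mul_of_nonneg_right h5 hκ.le
    have h7 : 784 * η ^ 2 * (s / κ) * κ = 784 * η ^ 2 * s := by
      field_simp
    linarith [h6, h7.symm.trans_le h6]
  -- componentwise bound from the scaled sup-norm bound
  have hcomp : ∀ (w : Fin p → ℝ) (c : ℝ), ‖(n : ℝ)⁻¹ • w‖ ≤ c → ∀ j, |w j| ≤ n * c := by
    intro w c hw j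
    have h1 : ‖((n:ℝ)⁻¹ • w) j‖ ≤ c := (norm_le_pi_norm _ j).trans hw
    have h2 : (n:ℝ)⁻¹ * |w j| ≤ c := by
      simpa [Real.norm_eq_abs, abs_mul, abs_inv, abs_of_nonneg hn0.le] using h1
    have := mul_le_mul_of_nonneg_left h2 hn0.le
    rw [← mul_assoc, mul_inv_cancel₀ hn0.ne', one_mul] at this
    exact this
  -- dual pairing
  have hpair : ∀ (v : Fin n → ℝ) (a : Fin p → ℝ),
      ∑ i, v i * G.mulVec a i = ∑ j, G.transpose.mulVec v j * a j := by
    intro v a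
    simp only [Matrix.mulVec, dotProduct, Matrix.transpose_apply, Finset.mul_sum,
      Finset.sum_mul]
    rw [Finset.sum_comm]
    apply Finset.sum_congr rfl; intro j _
    apply Finset.sum_congr rfl; intro i _
    ring
  -- Hölder
  have hholder : ∀ (w a : Fin p → ℝ) (c : ℝ), (∀ j, |w j| ≤ c) →
      |∑ j, w j * a j| ≤ c * ∑ j, |a j| := by
    intro w a c hw
    calc |∑ j, w j * a j| ≤ ∑ j, |w j * a j| := Finset.abs_sum_le_sum_abs _ _
      _ ≤ ∑ j, c * |a j| := Finset.sum_le_sum fun j _ => by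
          rw [abs_mul]; exact mul_le_mul_of_nonneg_right (hw j) (abs_nonneg _)
      _ = c * ∑ j, |a j| := (Finset.mul_sum _ _ _).symm
  -- noise componentwise
  have hnoiseC : ∀ j, |G.transpose.mulVec ε j| ≤ n * (η * σstar) := hcomp _ _ hnoise
  -- the key lemma, for any σ ≥ σstar
  have key : ∀ σ : ℝ, σstar ≤ σ →
      κ * (∑ j, |(bstar - bhat σ) j|) ≤ 8 * η * σ * s ∧
      (∑ i, (G.mulVec (bstar - bhat σ) i) ^ 2) ≤
        2 * η * σ * n * (∑ j, |(bstar - bhat σ) j|) ∧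
      |∑ i, ε i * G.mulVec (bstar - bhat σ) i| ≤
        n * (η * σstar) * (∑ j, |(bstar - bhat σ) j|) ∧
      (∀ i, H i - G.mulVec (bhat σ) i = G.mulVec (bstar - bhat σ) i + ε i) := by
    intro σ hσs
    have hσ0 : 0 ≤ σ := hσstar.le.trans hσs
    obtain ⟨hfeas, hmin⟩ := hbhat σ hσ0
    set Δ : Fin p → ℝ := bstar - bhat σ with hΔdef
    have hL0 : 0 ≤ ∑ j, |Δ j| := Finset.sum_nonneg fun j _ => abs_nonneg _
    -- residual identity
    have hresid : ∀ i, H i - G.mulVec (bhat σ) i = G.mulVec Δ i + ε i := by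
      intro i
      have : G.mulVec Δ = G.mulVec bstar - G.mulVec (bhat σ) := Matrix.mulVec_sub _ _ _
      rw [hH]
      simp [this, Pi.add_apply, Pi.sub_apply]
      ring
    -- bstar is feasible at level σ
    have hresb : H - G.mulVec bstar = ε := by rw [hH]; abel
    have hfeasb : ‖(n : ℝ)⁻¹ • G.transpose.mulVec (H - G.mulVec bstar)‖ ≤ η * σ := by
      rw [hresb]
      exact hnoise.trans (by nlinarith)
    have hl1 : (∑ i, |bhat σ i|) ≤ ∑ i, |bstar i| := hmin bstar hfeasb
    -- cone condition
    have hzero : ∀ i ∈ Jᶜ, bstar i = 0 := by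
      intro i hi
      by_contra h
      exact (Finset.mem_compl.mp hi) ((hJ i).mpr h)
    have hcone : (∑ i ∈ Jᶜ, |Δ i|) ≤ ∑ i ∈ J, |Δ i| := by
      have e1 : ∑ i ∈ Jᶜ, |Δ i| = ∑ i ∈ Jᶜ, |bhat σ i| := by
        apply Finset.sum_congr rfl
        intro i hi
        simp [hΔdef, Pi.sub_apply, hzero i hi]
      have e2 : ∑ i ∈ Jᶜ, |bstar i| = 0 :=
        Finset.sum_eq_zero fun i hi => by simp [hzero i hi]
      have e3 : ∑ i ∈ J, |bhat σ i| + ∑ i ∈ Jᶜ, |bhat σ i| = ∑ i, |bhat σ i| :=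
        Finset.sum_add_sum_compl J _
      have e4 : ∑ i ∈ J, |bstar i| + ∑ i ∈ Jᶜ, |bstar i| = ∑ i, |bstar i| :=
        Finset.sum_add_sum_compl J _
      have e5 : ∑ i ∈ J, (|bstar i| - |bhat σ i|) ≤ ∑ i ∈ J, |Δ i| :=
        Finset.sum_le_sum fun i _ => by
          simpa [hΔdef, Pi.sub_apply] using abs_sub_abs_le_abs_sub (bstar i) (bhat σ i)
      rw [Finset.sum_sub_distrib] at e5
      linarith [e1, e2, e3, e4, e5, hl1]
    -- combined feasibility: componentwise bound on Gᵀ G Δ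
    have hfeasC : ∀ j, |G.transpose.mulVec (H - G.mulVec (bhat σ)) j| ≤ n * (η * σ) :=
      hcomp _ _ hfeas
    have hGtGΔ : ∀ j, |G.transpose.mulVec (G.mulVec Δ) j| ≤ n * (2 * η * σ) := by
      intro j
      have hfun : G.mulVec Δ = (H - G.mulVec (bhat σ)) - ε := by
        funext i
        simp [hresid i, Pi.sub_apply]
      have : G.transpose.mulVec (G.mulVec Δ) =
          G.transpose.mulVec (H - G.mulVec (bhat σ)) - G.transpose.mulVec ε := by
        rw [hfun, Matrix.mulVec_sub]
      rw [this]
      have h1 := hfeasC j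
      have h2 := hnoiseC j
      have h3 : |G.transpose.mulVec (H - G.mulVec (bhat σ)) j - G.transpose.mulVec ε j| ≤
          |G.transpose.mulVec (H - G.mulVec (bhat σ)) j| + |G.transpose.mulVec ε j| :=
        abs_sub _ _
      have h4 : η * σstar ≤ η * σ := mul_le_mul_of_nonneg_left hσs hη.le
      have h5 : (n:ℝ) * (η * σstar) ≤ n * (η * σ) := mul_le_mul_of_nonneg_left h4 hn0.le
      simp only [Pi.sub_apply]
      linarith
    -- quadratic bound
    have hQ : (∑ i, (G.mulVec Δ i) ^ 2) ≤ 2 * η * σ * n * (∑ j, |Δ j|) := by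
      have h1 : ∑ i, (G.mulVec Δ i) ^ 2 = ∑ i, G.mulVec Δ i * G.mulVec Δ i := by
        apply Finset.sum_congr rfl; intro i _; ring
      rw [h1, hpair (G.mulVec Δ) Δ]
      calc ∑ j, G.transpose.mulVec (G.mulVec Δ) j * Δ j
          ≤ |∑ j, G.transpose.mulVec (G.mulVec Δ) j * Δ j| := le_abs_self _
        _ ≤ n * (2 * η * σ) * ∑ j, |Δ j| := hholder _ _ _ hGtGΔ
        _ = 2 * η * σ * n * ∑ j, |Δ j| := by ring
    -- cross term bound
    have hcross : |∑ i, ε i * G.mulVec Δ i| ≤ n * (η * σstar) * (∑ j, |Δ j|) := by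
      rw [hpair ε Δ]
      exact hholder _ _ _ hnoiseC
    refine ⟨?_, hQ, hcross, hresid⟩
    -- L1 bound via cone + RE + Cauchy-Schwarz
    by_cases hΔ0 : Δ = 0
    · have : ∑ j, |Δ j| = 0 := by simp [hΔ0]
      rw [this, mul_zero]
      positivity
    · have hre := hRE J le_rfl Δ hΔ0 hcone
      -- Cauchy-Schwarz: (∑_J |Δ|)² ≤ s * ∑_J Δ²
      have hcs : (∑ i ∈ J, |Δ i|) ^ 2 ≤ s * ∑ i ∈ J, (Δ i) ^ 2 := by
        have := Finset.sum_mul_sq_le_sq_mul_sq J (fun _ => (1:ℝ)) (fun i => |Δ i|)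
        simp only [one_mul, one_pow, sq_abs] at this
        simpa [hs, Finset.sum_const, nsmul_eq_mul] using this
      set T : ℝ := ∑ i ∈ J, |Δ i| with hT
      set L : ℝ := ∑ j, |Δ j| with hLdef
      have hT0 : 0 ≤ T := Finset.sum_nonneg fun i _ => abs_nonneg _
      have hL2T : L ≤ 2 * T := by
        have : T + ∑ i ∈ Jᶜ, |Δ i| = L := Finset.sum_add_sum_compl J _
        linarith [hcone]
      -- chain: n κ T² ≤ n κ s ∑_J Δ² ≤ s Q ≤ s 2ησ n L
      have h1 : (n : ℝ) * κ * T ^ 2 ≤ s * (2 * η * σ * n * L) := by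
        have a1 : (n:ℝ) * κ * T ^ 2 ≤ (n:ℝ) * κ * (s * ∑ i ∈ J, (Δ i) ^ 2) := by
          apply mul_le_mul_of_nonneg_left hcs
          positivity
        have a2 : (n:ℝ) * κ * (s * ∑ i ∈ J, (Δ i) ^ 2) = s * ((n:ℝ) * κ * ∑ i ∈ J, (Δ i) ^ 2) := by
          ring
        have a3 : s * ((n:ℝ) * κ * ∑ i ∈ J, (Δ i) ^ 2) ≤ s * (∑ i, (G.mulVec Δ i) ^ 2) :=
          mul_le_mul_of_nonneg_left hre hs0
        have a4 : s * (∑ i, (G.mulVec Δ i) ^ 2) ≤ s * (2 * η * σ * n * L) :=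
          mul_le_mul_of_nonneg_left hQ hs0
        linarith
      -- hence κ L² ≤ 8 η σ s L
      have h1b : κ * T ^ 2 ≤ 2 * η * σ * s * L :=
        le_of_mul_le_mul_left (by nlinarith [h1] :
          (n:ℝ) * (κ * T ^ 2) ≤ (n:ℝ) * (2 * η * σ * s * L)) hn0
      have hLsq : L ^ 2 ≤ 4 * T ^ 2 := by nlinarith [hL2T, hL0, hT0]
      have h2 : κ * L ^ 2 ≤ 8 * η * σ * s * L := by
        have := mul_le_mul_of_nonneg_left hLsq hκ.le
        nlinarith [this, h1b]
      rcases eq_or_lt_of_le hL0 with hLz | hLpos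
      · rw [← hLz, mul_zero]
        positivity
      · have := le_of_mul_le_mul_right (by nlinarith : κ * L * L ≤ 8 * η * σ * s * L) hLpos
        exact this
  -- Part 1: σstar ≤ σtilde
  have part1 : σstar ≤ σtilde := by
    obtain ⟨hL, hQ, hcross, hresid⟩ := key σstar le_rfl
    set Δ : Fin p → ℝ := bstar - bhat σstar with hΔdef
    set L : ℝ := ∑ j, |Δ j| with hLdef
    have hL0 : 0 ≤ L := Finset.sum_nonneg fun j _ => abs_nonneg _
    have hQ0 : 0 ≤ ∑ i, (G.mulVec Δ i) ^ 2 := Finset.sum_nonneg fun i _ => sq_nonneg _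
    -- expand the residual
    have hexp : ∑ i, (H i - G.mulVec (bhat σstar) i) ^ 2 =
        (∑ i, (G.mulVec Δ i) ^ 2) + 2 * (∑ i, ε i * G.mulVec Δ i) + ∑ i, (ε i) ^ 2 := by
      have e1 : ∀ i, (H i - G.mulVec (bhat σstar) i) ^ 2 =
          (G.mulVec Δ i) ^ 2 + 2 * (ε i * G.mulVec Δ i) + (ε i) ^ 2 := by
        intro i; rw [hresid i]; ring
      rw [Finset.sum_congr rfl (fun i _ => e1 i), Finset.sum_add_distrib,
        Finset.sum_add_distrib, ← Finset.mul_sum]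
    have hE : 3 * σstar ^ 2 / 4 * n ≤ ∑ i, (ε i) ^ 2 := by
      have := hnoise2.1
      have h := mul_le_mul_of_nonneg_left this hn0.le
      rw [← mul_assoc, mul_inv_cancel₀ hn0.ne', one_mul] at h
      linarith
    -- bound the cross term: n η σstar L ≤ n σstar² / 98
    have hcross2 : n * (η * σstar) * L ≤ n * σstar ^ 2 / 98 := by
      have b1 : κ * (n * (η * σstar) * L) ≤ n * (η * σstar) * (8 * η * σstar * s) := by
        have := mul_le_mul_of_nonneg_left hL (by positivity : (0:ℝ) ≤ n * (η * σstar))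
        nlinarith [this]
      have b2 : n * (η * σstar) * (8 * η * σstar * s) = 8 * (η^2 * s) * (n * σstar ^ 2) := by ring
      have b3 : 8 * (η^2 * s) * (n * σstar ^ 2) ≤ 8 * (κ / 784) * (n * σstar ^ 2) := by
        have : η ^ 2 * s ≤ κ / 784 := by linarith
        apply mul_le_mul_of_nonneg_right _ (by positivity)
        linarith
      have b4 : κ * (n * (η * σstar) * L) ≤ κ * (n * σstar ^ 2 / 98) := by
        rw [b2] at b1
        calc κ * (n * (η * σstar) * L) ≤ 8 * (κ / 784) * (n * σstar ^ 2) := le_trans b1 b3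
          _ = κ * (n * σstar ^ 2 / 98) := by ring
      exact le_of_mul_le_mul_left b4 hκ
    apply hσtilde2 σstar hσstar.le
    rw [hexp]
    have habs : -(∑ i, ε i * G.mulVec Δ i) ≤ n * (η * σstar) * L :=
      (neg_le_abs _).trans hcross
    nlinarith [hE, hQ0, habs, hcross2, hn0, sq_nonneg σstar]
  -- Part 2: σtilde ≤ 3 σstar
  have part2 : σtilde ≤ 3 * σstar := by
    obtain ⟨hL, hQ, hcross, hresid⟩ := key σtilde part1
    set Δ : Fin p → ℝ := bstar - bhat σtilde with hΔdef
    set L : ℝ := ∑ j, |Δ j| with hLdef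
    have hL0 : 0 ≤ L := Finset.sum_nonneg fun j _ => abs_nonneg _
    have hexp : ∑ i, (H i - G.mulVec (bhat σtilde) i) ^ 2 =
        (∑ i, (G.mulVec Δ i) ^ 2) + 2 * (∑ i, ε i * G.mulVec Δ i) + ∑ i, (ε i) ^ 2 := by
      have e1 : ∀ i, (H i - G.mulVec (bhat σtilde) i) ^ 2 =
          (G.mulVec Δ i) ^ 2 + 2 * (ε i * G.mulVec Δ i) + (ε i) ^ 2 := by
        intro i; rw [hresid i]; ring
      rw [Finset.sum_congr rfl (fun i _ => e1 i), Finset.sum_add_distrib,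
        Finset.sum_add_distrib, ← Finset.mul_sum]
    have hE : (∑ i, (ε i) ^ 2) ≤ 2 * σstar ^ 2 * n := by
      have := hnoise2.2
      have h := mul_le_mul_of_nonneg_left this hn0.le
      rw [← mul_assoc, mul_inv_cancel₀ hn0.ne', one_mul] at h
      linarith
    -- Q ≤ n σtilde² / 49
    have hQ2 : (∑ i, (G.mulVec Δ i) ^ 2) ≤ n * σtilde ^ 2 / 49 := by
      have b1 : κ * (∑ i, (G.mulVec Δ i) ^ 2) ≤ 2 * η * σtilde * n * (8 * η * σtilde * s) := by
        have c1 := mul_le_mul_of_nonneg_left hQ hκ.le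
        have c2 := mul_le_mul_of_nonneg_left hL
          (by positivity : (0:ℝ) ≤ 2 * η * σtilde * n)
        nlinarith [c1, c2]
      have b2 : 2 * η * σtilde * n * (8 * η * σtilde * s) = 16 * (η^2 * s) * (n * σtilde ^ 2) := by
        ring
      have b3 : 16 * (η^2 * s) * (n * σtilde ^ 2) ≤ 16 * (κ / 784) * (n * σtilde ^ 2) := by
        apply mul_le_mul_of_nonneg_right _ (by positivity)
        linarith
      have b4 : κ * (∑ i, (G.mulVec Δ i) ^ 2) ≤ κ * (n * σtilde ^ 2 / 49) := by
        rw [b2] at b1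
        calc κ * (∑ i, (G.mulVec Δ i) ^ 2) ≤ 16 * (κ / 784) * (n * σtilde ^ 2) :=
            le_trans b1 b3
          _ = κ * (n * σtilde ^ 2 / 49) := by ring
      exact le_of_mul_le_mul_left b4 hκ
    -- cross ≤ n σstar σtilde / 98
    have hcross2 : n * (η * σstar) * L ≤ n * σstar * σtilde / 98 := by
      have b1 : κ * (n * (η * σstar) * L) ≤ n * (η * σstar) * (8 * η * σtilde * s) := by
        have := mul_le_mul_of_nonneg_left hL (by positivity : (0:ℝ) ≤ n * (η * σstar))
        nlinarith [this]
      have b2 : n * (η * σstar) * (8 * η * σtilde * s) = 8 * (η^2 * s) * (n * σstar * σtilde) := by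
        ring
      have hprod : (0:ℝ) ≤ n * σstar * σtilde := by positivity
      have b3 : 8 * (η^2 * s) * (n * σstar * σtilde) ≤ 8 * (κ / 784) * (n * σstar * σtilde) := by
        apply mul_le_mul_of_nonneg_right _ hprod
        linarith
      have b4 : κ * (n * (η * σstar) * L) ≤ κ * (n * σstar * σtilde / 98) := by
        rw [b2] at b1
        calc κ * (n * (η * σstar) * L) ≤ 8 * (κ / 784) * (n * σstar * σtilde) :=
            le_trans b1 b3
          _ = κ * (n * σstar * σtilde / 98) := by ring
      exact le_of_mul_le_mul_left b4 hκ
    have habs : (∑ i, ε i * G.mulVec Δ i) ≤ n * (η * σstar) * L :=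
      (le_abs_self _).trans hcross
    rw [hexp] at hσtilde1
    -- n σtilde²/2 ≤ n σtilde²/49 + n σstar σtilde/49 + 2 n σstar²
    have hmain : (n:ℝ) * σtilde ^ 2 / 2 ≤
        n * σtilde ^ 2 / 49 + n * σstar * σtilde / 49 + 2 * σstar ^ 2 * n := by
      nlinarith [hσtilde1, hQ2, habs, hcross2, hE]
    -- conclude σtilde ≤ 3 σstar
    by_contra hcon
    push_neg at hcon
    have h1 : 0 < σtilde - 3 * σstar := by linarith
    have hσt0 : 0 < σtilde := lt_of_lt_of_le hσstar part1
    nlinarith [hmain, mul_pos (mul_pos hn0 h1) hσstar, mul_pos (mul_pos hn0 h1) hσt0,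
      mul_pos hn0 (mul_pos hσstar hσstar)]
  exact ⟨part1, part2⟩
end

section
/- Under the ADDS assumptions of Theorem 2, the estimator $\tilde{b} = \hat{b}(\tilde\sigma)$ satisfies $\|G(\tilde{b} - b_*)\|_2 \leq 8\sigma_*\eta\sqrt{n\|b_*\|_0/\kappa}$ and $\|\tilde{b} - b_*\|_1 \leq 16\eta\sigma_*\|b_*\|_0/\kappa$. -/
set_option maxHeartbeats 2000000

lemma dot_swap' {n p : ℕ} (G : Matrix (Fin n) (Fin p) ℝ) (u : Fin n → ℝ) (a : Fin p → ℝ) :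
    ∑ i, G.mulVec a i * u i = ∑ j, G.transpose.mulVec u j * a j := by
  simp only [Matrix.mulVec, dotProduct, Matrix.transpose_apply, Finset.sum_mul,
    Finset.mul_sum]
  rw [Finset.sum_comm]
  exact Finset.sum_congr rfl fun j _ => Finset.sum_congr rfl fun i _ => by ring

lemma entry_bound' {n p : ℕ} (hn : 0 < n) (w : Fin p → ℝ) (c : ℝ)
    (h : ‖(n : ℝ)⁻¹ • w‖ ≤ c) (j : Fin p) : |w j| ≤ n * c := by
  have hn' : (0:ℝ) < n := by exact_mod_cast hn
  have h1 : ‖((n:ℝ)⁻¹ • w) j‖ ≤ ‖(n:ℝ)⁻¹ • w‖ := norm_le_pi_norm _ j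
  have h2 : (n:ℝ)⁻¹ * |w j| ≤ c := by
    have : ‖((n:ℝ)⁻¹ • w) j‖ = (n:ℝ)⁻¹ * |w j| := by
      simp [Real.norm_eq_abs, abs_mul, abs_of_pos (inv_pos.mpr hn')]
    linarith [h1.trans h, this.symm.le]
  have h3 := mul_le_mul_of_nonneg_left h2 hn'.le
  calc |w j| = (n:ℝ) * ((n:ℝ)⁻¹ * |w j|) := by field_simp
    _ ≤ n * c := h3

lemma sum_sub_sq' {n : ℕ} (a b : Fin n → ℝ) :
    ∑ i, (a i - b i)^2 = (∑ i, (a i)^2) - 2*(∑ i, a i * b i) + ∑ i, (b i)^2 := by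
  have h1 : ∑ i, 2 * a i * b i = 2 * ∑ i, a i * b i := by
    rw [Finset.mul_sum]; exact Finset.sum_congr rfl fun i _ => by ring
  simp only [sub_sq]
  rw [Finset.sum_add_distrib, Finset.sum_sub_distrib, h1]

lemma le_of_sq_le_sq'' {a b : ℝ} (hb : 0 ≤ b) (h : a^2 ≤ b^2) (ha : 0 ≤ a) : a ≤ b := by
  nlinarith


/-- Under the ADDS assumptions, the estimator `b̃ = b̂(σ̃)` satisfies `‖G(b̃ - b_*)‖₂ ≤ 8 σ_* η √(n s/κ)` and `‖b̃ - b_*‖₁ ≤ 16 η σ_* s/κ` where `s = ‖b_*‖₀`. -/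
theorem stmt11 {n p : ℕ} (hn : 0 < n)
    (G : Matrix (Fin n) (Fin p) ℝ) (bstar : Fin p → ℝ) (ε : Fin n → ℝ)
    (H : Fin n → ℝ) (hH : H = G.mulVec bstar + ε)
    (η κ σstar : ℝ) (hη : 0 < η) (hκ : 0 < κ) (hσstar : 0 < σstar)
    (J : Finset (Fin p)) (hJ : ∀ i, i ∈ J ↔ bstar i ≠ 0)
    -- (i) bound on the noise correlation
    (hnoise : ‖(n : ℝ)⁻¹ • G.transpose.mulVec ε‖ ≤ η * σstar)
    -- (ii) the noise scale is proxied by σstar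
    (hnoise2 : 3 * σstar ^ 2 / 4 ≤ (n : ℝ)⁻¹ * (∑ i, (ε i) ^ 2) ∧
      (n : ℝ)⁻¹ * (∑ i, (ε i) ^ 2) ≤ 2 * σstar ^ 2)
    -- (iv) sparsity condition: 28 η √(s/κ) ≤ 1 with s = ‖bstar‖₀
    (hsparse : 28 * η * Real.sqrt ((J.card : ℝ) / κ) ≤ 1)
    -- (v) restricted eigenvalue condition with constant κ
    (hRE : ∀ J0 : Finset (Fin p), J0.card ≤ J.card →
      ∀ a : Fin p → ℝ, a ≠ 0 → (∑ i ∈ J0ᶜ, |a i|) ≤ (∑ i ∈ J0, |a i|) →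
        (n : ℝ) * κ * (∑ i ∈ J0, (a i) ^ 2) ≤ ∑ i, (G.mulVec a i) ^ 2)
    -- the Dantzig-type solution path: bhat σ minimizes ‖b‖₁ subject to
    -- ‖n⁻¹ Gᵀ (H - G b)‖∞ ≤ η σ
    (bhat : ℝ → Fin p → ℝ)
    (hbhat : ∀ σ : ℝ, 0 ≤ σ →
      ‖(n : ℝ)⁻¹ • G.transpose.mulVec (H - G.mulVec (bhat σ))‖ ≤ η * σ ∧
        ∀ b : Fin p → ℝ, ‖(n : ℝ)⁻¹ • G.transpose.mulVec (H - G.mulVec b)‖ ≤ η * σ →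
          (∑ i, |bhat σ i|) ≤ ∑ i, |b i|)
    -- σtilde is the largest σ ≥ 0 with ‖H - G (bhat σ)‖₂² ≥ n σ²/2
    (σtilde : ℝ) (hσtilde0 : 0 ≤ σtilde)
    (hσtilde1 : (n : ℝ) * σtilde ^ 2 / 2 ≤ ∑ i, (H i - G.mulVec (bhat σtilde) i) ^ 2)
    (hσtilde2 : ∀ σ : ℝ, 0 ≤ σ →
      (n : ℝ) * σ ^ 2 / 2 ≤ (∑ i, (H i - G.mulVec (bhat σ) i) ^ 2) → σ ≤ σtilde) :
    Real.sqrt (∑ i, (G.mulVec (bhat σtilde - bstar) i) ^ 2) ≤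
      8 * σstar * η * Real.sqrt ((n : ℝ) * (J.card : ℝ) / κ) ∧
    (∑ i, |bhat σtilde i - bstar i|) ≤ 16 * η * σstar * (J.card : ℝ) / κ := by
  have hn' : (0:ℝ) < n := by exact_mod_cast hn
  have hs0 : (0:ℝ) ≤ (J.card : ℝ) := Nat.cast_nonneg _
  set sq : ℝ := Real.sqrt (J.card : ℝ) with hsqdef
  set kq : ℝ := Real.sqrt κ with hkqdef
  set nq : ℝ := Real.sqrt (n : ℝ) with hnqdef
  have hsq2 : sq^2 = (J.card : ℝ) := Real.sq_sqrt hs0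
  have hkq2 : kq^2 = κ := Real.sq_sqrt hκ.le
  have hnq2 : nq^2 = (n:ℝ) := Real.sq_sqrt hn'.le
  have hkq0 : 0 < kq := Real.sqrt_pos.mpr hκ
  have hnq0 : 0 < nq := Real.sqrt_pos.mpr hn'
  have hsq0 : 0 ≤ sq := Real.sqrt_nonneg _
  have hsp : 28 * η * sq ≤ kq := by
    rw [Real.sqrt_div hs0, ← hsqdef, ← hkqdef] at hsparse
    have h' := mul_le_mul_of_nonneg_right hsparse hkq0.le
    rw [one_mul] at h'
    calc 28 * η * sq = 28 * η * (sq / kq) * kq := by field_simp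
      _ ≤ kq := h'
  have hε : ∀ j, |G.transpose.mulVec ε j| ≤ n * (η * σstar) :=
    entry_bound' hn _ _ hnoise
  have hHb : H - G.mulVec bstar = ε := by rw [hH]; abel
  have hpt : ∀ σ i, H i - G.mulVec (bhat σ) i = ε i - G.mulVec (bhat σ - bstar) i := by
    intro σ i
    rw [Matrix.mulVec_sub]
    have := congrFun hHb i
    simp only [Pi.sub_apply] at this ⊢
    linarith
  -- the key structural lemma
  have key : ∀ σ : ℝ, σstar ≤ σ →
      kq * nq * (∑ i, |bhat σ i - bstar i|) ≤
        2 * sq * Real.sqrt (∑ i, (G.mulVec (bhat σ - bstar) i) ^ 2) ∧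
      kq * Real.sqrt (∑ i, (G.mulVec (bhat σ - bstar) i) ^ 2) ≤
        2 * η * (σ + σstar) * nq * sq := by
    intro σ hσ
    have hσ0 : 0 ≤ σ := le_trans hσstar.le hσ
    obtain ⟨hfeas, hmin⟩ := hbhat σ hσ0
    set δ : Fin p → ℝ := bhat σ - bstar with hδdef
    set X : ℝ := Real.sqrt (∑ i, (G.mulVec δ i) ^ 2) with hXdef
    have hX0 : (0:ℝ) ≤ X := Real.sqrt_nonneg _
    have hXsq : X^2 = ∑ i, (G.mulVec δ i) ^ 2 := Real.sq_sqrt (by positivity)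
    have hbfeas : ‖(n:ℝ)⁻¹ • G.transpose.mulVec (H - G.mulVec bstar)‖ ≤ η * σ := by
      rw [hHb]; exact hnoise.trans (mul_le_mul_of_nonneg_left hσ hη.le)
    have hl1 : ∑ i, |bhat σ i| ≤ ∑ i, |bstar i| := hmin bstar hbfeas
    have hbzero : ∀ i ∈ Jᶜ, bstar i = 0 := by
      intro i hi
      by_contra h
      exact (Finset.mem_compl.mp hi) ((hJ i).mpr h)
    have hδi : ∀ i, δ i = bhat σ i - bstar i := fun i => rfl
    have hcone : ∑ i ∈ Jᶜ, |δ i| ≤ ∑ i ∈ J, |δ i| := by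
      have h1 : ∑ i ∈ Jᶜ, |δ i| = ∑ i ∈ Jᶜ, |bhat σ i| :=
        Finset.sum_congr rfl fun i hi => by rw [hδi i, hbzero i hi, sub_zero]
      have h2 : ∑ i ∈ J, |bstar i| ≤ ∑ i ∈ J, |bhat σ i| + ∑ i ∈ J, |δ i| := by
        rw [← Finset.sum_add_distrib]
        refine Finset.sum_le_sum fun i _ => ?_
        have : bstar i = bhat σ i - δ i := by rw [hδi i]; ring
        rw [this]; exact abs_sub _ _
      have h3 : ∑ i ∈ J, |bhat σ i| + ∑ i ∈ Jᶜ, |bhat σ i| =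
          ∑ i, |bhat σ i| := Finset.sum_add_sum_compl J _
      have h4 : ∑ i ∈ J, |bstar i| + ∑ i ∈ Jᶜ, |bstar i| =
          ∑ i, |bstar i| := Finset.sum_add_sum_compl J _
      have h5 : ∑ i ∈ Jᶜ, |bstar i| = 0 :=
        Finset.sum_eq_zero fun i hi => by rw [hbzero i hi, abs_zero]
      linarith
    have hsplitδ : ∑ i ∈ J, |δ i| + ∑ i ∈ Jᶜ, |δ i| = ∑ i, |δ i| :=
      Finset.sum_add_sum_compl J _
    have hL : (∑ i, |δ i|) ≤ 2 * ∑ i ∈ J, |δ i| := by linarith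
    have hSJ0 : (0:ℝ) ≤ ∑ i ∈ J, |δ i| := Finset.sum_nonneg fun i _ => abs_nonneg _
    have hCS : (∑ i ∈ J, |δ i|)^2 ≤ (J.card : ℝ) * ∑ i ∈ J, (δ i)^2 := by
      have h := sq_sum_le_card_mul_sum_sq (s := J) (f := fun i => |δ i|)
      simpa [sq_abs] using h
    have hRE2 : (n:ℝ) * κ * (∑ i ∈ J, (δ i)^2) ≤ X^2 := by
      by_cases hδ : δ = 0
      · have : ∀ i ∈ J, (δ i)^2 = 0 := fun i _ => by rw [hδ]; simp
        rw [Finset.sum_eq_zero this, mul_zero]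
        exact sq_nonneg X
      · rw [hXsq]; exact hRE J le_rfl δ hδ hcone
    have hJb : kq * nq * (∑ i ∈ J, |δ i|) ≤ sq * X := by
      have hab : (kq * nq * (∑ i ∈ J, |δ i|))^2 ≤ (sq * X)^2 := by
        calc (kq * nq * (∑ i ∈ J, |δ i|))^2
            = (n:ℝ) * κ * ((∑ i ∈ J, |δ i|)^2) := by
              rw [mul_pow, mul_pow, hkq2, hnq2]; ring
          _ ≤ (n:ℝ) * κ * ((J.card : ℝ) * ∑ i ∈ J, (δ i)^2) := by
              apply mul_le_mul_of_nonneg_left hCS (by positivity)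
          _ = (J.card : ℝ) * ((n:ℝ) * κ * ∑ i ∈ J, (δ i)^2) := by ring
          _ ≤ (J.card : ℝ) * X^2 := mul_le_mul_of_nonneg_left hRE2 hs0
          _ = (sq * X)^2 := by rw [mul_pow, hsq2]
      exact le_of_sq_le_sq'' (by positivity) hab (by positivity)
    have hL2 : kq * nq * (∑ i, |δ i|) ≤ 2 * sq * X := by
      calc kq * nq * (∑ i, |δ i|) ≤ kq * nq * (2 * ∑ i ∈ J, |δ i|) := by
            apply mul_le_mul_of_nonneg_left hL (by positivity)
        _ = 2 * (kq * nq * ∑ i ∈ J, |δ i|) := by ring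
        _ ≤ 2 * (sq * X) := by linarith
        _ = 2 * sq * X := by ring
    have hfeasj : ∀ j, |G.transpose.mulVec (H - G.mulVec (bhat σ)) j| ≤ n * (η * σ) :=
      entry_bound' hn _ _ hfeas
    have hGtG : ∀ j, |G.transpose.mulVec (G.mulVec δ) j| ≤ (n:ℝ) * (η * (σ + σstar)) := by
      intro j
      have hveq : G.mulVec δ = (H - G.mulVec bstar) - (H - G.mulVec (bhat σ)) := by
        rw [hδdef, Matrix.mulVec_sub]; abel
      have hdecomp : G.transpose.mulVec (G.mulVec δ) j =
          G.transpose.mulVec ε j - G.transpose.mulVec (H - G.mulVec (bhat σ)) j := by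
        rw [hveq, Matrix.mulVec_sub, hHb]
        simp [Pi.sub_apply]
      rw [hdecomp]
      calc |G.transpose.mulVec ε j - G.transpose.mulVec (H - G.mulVec (bhat σ)) j|
          ≤ |G.transpose.mulVec ε j| + |G.transpose.mulVec (H - G.mulVec (bhat σ)) j| :=
            abs_sub _ _
        _ ≤ (n:ℝ) * (η * σstar) + (n:ℝ) * (η * σ) := add_le_add (hε j) (hfeasj j)
        _ = (n:ℝ) * (η * (σ + σstar)) := by ring
    have hX2 : X^2 ≤ (n:ℝ) * (η * (σ + σstar)) * ∑ i, |δ i| := by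
      rw [hXsq]
      have h1 : ∑ i, (G.mulVec δ i)^2 = ∑ i, G.mulVec δ i * G.mulVec δ i := by
        simp only [pow_two]
      rw [h1, dot_swap']
      calc ∑ j, G.transpose.mulVec (G.mulVec δ) j * δ j
          ≤ ∑ j, |G.transpose.mulVec (G.mulVec δ) j| * |δ j| := by
            refine Finset.sum_le_sum fun j _ => ?_
            calc G.transpose.mulVec (G.mulVec δ) j * δ j
                ≤ |G.transpose.mulVec (G.mulVec δ) j * δ j| := le_abs_self _
              _ = |G.transpose.mulVec (G.mulVec δ) j| * |δ j| := abs_mul _ _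
        _ ≤ ∑ j, (n:ℝ) * (η * (σ + σstar)) * |δ j| :=
            Finset.sum_le_sum fun j _ =>
              mul_le_mul_of_nonneg_right (hGtG j) (abs_nonneg _)
        _ = (n:ℝ) * (η * (σ + σstar)) * ∑ j, |δ j| := by rw [← Finset.mul_sum]
    have hXb : kq * X ≤ 2 * η * (σ + σstar) * nq * sq := by
      rcases eq_or_lt_of_le hX0 with hXz | hXpos
      · rw [← hXz, mul_zero]
        have : 0 < σ + σstar := by linarith
        positivity
      · have hc : kq * nq * X^2 ≤ 2 * η * (σ + σstar) * nq^2 * sq * X := by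
          calc kq * nq * X^2
              ≤ kq * nq * ((n:ℝ) * (η * (σ + σstar)) * ∑ i, |δ i|) := by
                apply mul_le_mul_of_nonneg_left hX2 (by positivity)
            _ = (n:ℝ) * (η * (σ + σstar)) * (kq * nq * ∑ i, |δ i|) := by ring
            _ ≤ (n:ℝ) * (η * (σ + σstar)) * (2 * sq * X) := by
                apply mul_le_mul_of_nonneg_left hL2 (by positivity)
            _ = 2 * η * (σ + σstar) * (n:ℝ) * sq * X := by ring
            _ = 2 * η * (σ + σstar) * nq^2 * sq * X := by rw [hnq2]
        have h2 : kq * X * (nq * X) ≤ (2 * η * (σ + σstar) * nq * sq) * (nq * X) := by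
          linarith [hc]
        exact le_of_mul_le_mul_right h2 (mul_pos hnq0 hXpos)
    exact ⟨hL2, hXb⟩
  -- quantities for the noise norm
  set Rε : ℝ := Real.sqrt (∑ i, (ε i)^2) with hRdef
  have hR0 : (0:ℝ) ≤ Rε := Real.sqrt_nonneg _
  have hRsq : Rε^2 = ∑ i, (ε i)^2 := Real.sq_sqrt (by positivity)
  have hR1 : 3 * (n:ℝ) * σstar^2 / 4 ≤ Rε^2 := by
    rw [hRsq]
    have h := mul_le_mul_of_nonneg_left hnoise2.1 hn'.le
    have hc : (n:ℝ) * ((n:ℝ)⁻¹ * ∑ i, (ε i)^2) = ∑ i, (ε i)^2 := by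
      field_simp
    linarith [h, hc.symm.le]
  have hR2 : Rε^2 ≤ 2 * (n:ℝ) * σstar^2 := by
    rw [hRsq]
    have h := mul_le_mul_of_nonneg_left hnoise2.2 hn'.le
    have hc : (n:ℝ) * ((n:ℝ)⁻¹ * ∑ i, (ε i)^2) = ∑ i, (ε i)^2 := by
      field_simp
    linarith [h, hc.symm.le]
  -- apply the key lemma at σstar
  obtain ⟨-, hXs⟩ := key σstar le_rfl
  set Xs : ℝ := Real.sqrt (∑ i, (G.mulVec (bhat σstar - bstar) i)^2) with hXsdef
  have hXs0 : (0:ℝ) ≤ Xs := Real.sqrt_nonneg _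
  have hXssq : Xs^2 = ∑ i, (G.mulVec (bhat σstar - bstar) i)^2 := Real.sq_sqrt (by positivity)
  have hXs7 : 7 * Xs ≤ σstar * nq := by
    have h1 : 7 * (kq * Xs) ≤ 7 * (2 * η * (σstar + σstar) * nq * sq) := by linarith
    have h2 : σstar * nq * (28 * η * sq) ≤ σstar * nq * kq :=
      mul_le_mul_of_nonneg_left hsp (by positivity)
    have h3 : kq * (7 * Xs) ≤ kq * (σstar * nq) := by linarith
    exact le_of_mul_le_mul_left h3 hkq0
  -- σstar ≤ σtilde
  have hresid : (n:ℝ) * σstar^2 / 2 ≤ ∑ i, (H i - G.mulVec (bhat σstar) i)^2 := by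
    have hrw : ∑ i, (H i - G.mulVec (bhat σstar) i)^2 =
        ∑ i, (ε i - G.mulVec (bhat σstar - bstar) i)^2 :=
      Finset.sum_congr rfl fun i _ => by rw [hpt σstar i]
    rw [hrw]
    have hexp : ∑ i, (ε i - G.mulVec (bhat σstar - bstar) i)^2 =
        Rε^2 - 2 * (∑ i, ε i * G.mulVec (bhat σstar - bstar) i) + Xs^2 := by
      rw [hRsq, hXssq]
      exact sum_sub_sq' ε (fun i => G.mulVec (bhat σstar - bstar) i)
    have hCSev : ∑ i, ε i * G.mulVec (bhat σstar - bstar) i ≤ Rε * Xs := by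
      rw [hRdef, hXsdef]
      exact Real.sum_mul_le_sqrt_mul_sqrt _ _ _
    have hRlow : (17/20) * σstar * nq ≤ Rε := by
      have hx : ((17/20) * σstar * nq)^2 ≤ Rε^2 := by
        have heq : ((17/20) * σstar * nq)^2 = (289/400) * σstar^2 * (n:ℝ) := by
          rw [mul_pow, mul_pow, hnq2]; ring
        rw [heq]
        linarith [hR1, mul_nonneg (sq_nonneg σstar) hn'.le]
      exact le_of_sq_le_sq'' hR0 hx (by positivity)
    have h5 : (99/140) * σstar * nq ≤ Rε - Xs := by linarith
    have h6 : (n:ℝ) * σstar^2 / 2 ≤ ((99/140) * σstar * nq)^2 := by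
      have heq : ((99/140) * σstar * nq)^2 = (9801/19600) * σstar^2 * (n:ℝ) := by
        rw [mul_pow, mul_pow, hnq2]; ring
      rw [heq]
      linarith [mul_nonneg hn'.le (sq_nonneg σstar)]
    have h7 : ((99/140) * σstar * nq)^2 ≤ (Rε - Xs)^2 := by
      apply pow_le_pow_left₀ (by positivity) h5
    have h8 : (Rε - Xs)^2 = Rε^2 - 2 * (Rε * Xs) + Xs^2 := by ring
    rw [hexp]
    linarith
  have hsle : σstar ≤ σtilde := hσtilde2 σstar hσstar.le hresid
  -- apply the key lemma at σtilde
  obtain ⟨hLt, hXt⟩ := key σtilde hsle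
  set Xt : ℝ := Real.sqrt (∑ i, (G.mulVec (bhat σtilde - bstar) i)^2) with hXtdef
  have hXt0 : (0:ℝ) ≤ Xt := Real.sqrt_nonneg _
  have hXtsq : Xt^2 = ∑ i, (G.mulVec (bhat σtilde - bstar) i)^2 := Real.sq_sqrt (by positivity)
  -- upper bound on the residual at σtilde
  have hub : (n:ℝ) * σtilde^2 / 2 ≤ (Rε + Xt)^2 := by
    have hrw : ∑ i, (H i - G.mulVec (bhat σtilde) i)^2 =
        ∑ i, (ε i - G.mulVec (bhat σtilde - bstar) i)^2 :=
      Finset.sum_congr rfl fun i _ => by rw [hpt σtilde i]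
    have hexp : ∑ i, (ε i - G.mulVec (bhat σtilde - bstar) i)^2 =
        Rε^2 - 2 * (∑ i, ε i * G.mulVec (bhat σtilde - bstar) i) + Xt^2 := by
      rw [hRsq, hXtsq]
      exact sum_sub_sq' ε (fun i => G.mulVec (bhat σtilde - bstar) i)
    have hCSev : -(∑ i, ε i * G.mulVec (bhat σtilde - bstar) i) ≤ Rε * Xt := by
      have h := Real.sum_mul_le_sqrt_mul_sqrt Finset.univ (fun i => -(ε i))
        (fun i => G.mulVec (bhat σtilde - bstar) i)
      simp only [neg_mul, Finset.sum_neg_distrib, neg_sq] at h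
      rw [hRdef, hXtdef]
      exact h
    have h0 := hσtilde1
    rw [hrw, hexp] at h0
    have hexp2 : (Rε + Xt)^2 = Rε^2 + 2*(Rε*Xt) + Xt^2 := by ring
    linarith
  -- σtilde ≤ (66/25) σstar
  have hRup : Rε ≤ (3/2) * σstar * nq := by
    have hx : Rε^2 ≤ ((3/2) * σstar * nq)^2 := by
      have heq : ((3/2) * σstar * nq)^2 = (9/4) * σstar^2 * (n:ℝ) := by
        rw [mul_pow, mul_pow, hnq2]; ring
      rw [heq]
      linarith [hR2, mul_nonneg hn'.le (sq_nonneg σstar)]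
    exact le_of_sq_le_sq'' (by positivity) hx hR0
  have hXt14 : 14 * Xt ≤ (σtilde + σstar) * nq := by
    have h1 : 14 * (kq * Xt) ≤ 14 * (2 * η * (σtilde + σstar) * nq * sq) := by linarith
    have h2 : (σtilde + σstar) * nq * (28 * η * sq) ≤ (σtilde + σstar) * nq * kq := by
      apply mul_le_mul_of_nonneg_left hsp
      have : 0 < σtilde + σstar := by linarith
      positivity
    have h3 : kq * (14 * Xt) ≤ kq * ((σtilde + σstar) * nq) := by linarith
    exact le_of_mul_le_mul_left h3 hkq0
  have hnqσ : nq * σtilde ≤ (3/2) * (Rε + Xt) := by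
    have hx : (nq * σtilde)^2 ≤ ((3/2) * (Rε + Xt))^2 := by
      have h1 : (nq * σtilde)^2 = (n:ℝ) * σtilde^2 := by rw [mul_pow, hnq2]
      have h2 : ((3/2) * (Rε + Xt))^2 = (9/4) * (Rε + Xt)^2 := by ring
      rw [h1, h2]
      linarith [hub, sq_nonneg (Rε + Xt)]
    exact le_of_sq_le_sq'' (by positivity) hx (by positivity)
  have hσt : σtilde ≤ (66/25) * σstar := by
    have h1 : nq * σtilde ≤ nq * ((9/4) * σstar + (3/28) * (σtilde + σstar)) := by
      have h2 : nq * ((9/4) * σstar + (3/28) * (σtilde + σstar)) =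
          (9/4) * (σstar * nq) + (3/28) * ((σtilde + σstar) * nq) := by ring
      rw [h2]
      linarith [hnqσ, hRup, hXt14]
    have h2 : σtilde ≤ (9/4) * σstar + (3/28) * (σtilde + σstar) :=
      le_of_mul_le_mul_left h1 hnq0
    linarith
  -- final bounds
  have hkqXt : kq * Xt ≤ 8 * σstar * η * (nq * sq) := by
    have hc1 : 2 * η * (σtilde + σstar) * nq * sq ≤ 8 * σstar * η * (nq * sq) := by
      have hp := mul_le_mul_of_nonneg_left hσt
        (by positivity : (0:ℝ) ≤ 2 * η * nq * sq)
      have hq : (0:ℝ) ≤ η * nq * sq * σstar := by positivity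
      linarith [hp, hq]
    linarith
  constructor
  · -- ℓ2 prediction bound
    have hsqrt_eq : Real.sqrt ((n:ℝ) * (J.card : ℝ) / κ) = nq * sq / kq := by
      rw [Real.sqrt_div (by positivity), Real.sqrt_mul hn'.le]
    rw [hsqrt_eq, ← mul_div_assoc, le_div_iff₀ hkq0]
    linarith [hkqXt]
  · -- ℓ1 bound
    have hptδ : ∑ i, |bhat σtilde i - bstar i| = ∑ i, |(bhat σtilde - bstar) i| := rfl
    have hLnn : (0:ℝ) ≤ ∑ i, |bhat σtilde i - bstar i| :=
      Finset.sum_nonneg fun i _ => abs_nonneg _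
    have h2 : κ * nq * (∑ i, |bhat σtilde i - bstar i|) ≤
        16 * η * σstar * (J.card : ℝ) * nq := by
      have ha := mul_le_mul_of_nonneg_left hLt hkq0.le
      have hb := mul_le_mul_of_nonneg_left hkqXt (by positivity : (0:ℝ) ≤ 2 * sq)
      rw [← hkq2, ← hsq2]
      linarith [ha, hb]
    have h3 : nq * (κ * (∑ i, |bhat σtilde i - bstar i|)) ≤
        nq * (16 * η * σstar * (J.card : ℝ)) := by linarith [h2]
    have h4 : κ * (∑ i, |bhat σtilde i - bstar i|) ≤ 16 * η * σstar * (J.card : ℝ) :=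
      le_of_mul_le_mul_left h3 hnq0
    rw [le_div_iff₀ hκ]
    linarith [h4]
end

section
/- Under the ADDS assumptions of Theorem 2, the residual scale $\hat\sigma = n^{-1/2}\|H - G\tilde{b}\|_2$ satisfies $\sigma_*/\sqrt{2} \leq \hat\sigma \leq 2\sigma_*$, and moreover $\|n^{-1}G^\top(H - G\tilde{b})\|_\infty \leq 3\sqrt{2}\,\eta\,\hat\sigma$. -/
open Matrix

private lemma stmt12_arith {n κ η σ A B T Q s : ℝ} (hn' : 0 < n) (hκ : 0 < κ)
    (hη : 0 < η) (hσ0 : 0 ≤ σ) (hA0 : 0 ≤ A) (hB0 : 0 ≤ B) (hT0 : 0 ≤ T) (hQ0 : 0 ≤ Q)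
    (hs0 : 0 ≤ s) (cone : B ≤ A) (hc : T ≤ (A + B) * (n * (2*η*σ)))
    (hCS : A^2 ≤ s * Q) (hre : n * κ * Q ≤ T) (hsparse2 : 784 * η^2 * s ≤ κ) :
    A + B ≤ σ / (98 * η) ∧ T ≤ n * σ^2 / 49 := by
  have hT1 : T ≤ 4*n*η*σ*A := by
    have hAB : A + B ≤ 2*A := by linarith
    have h := mul_le_mul_of_nonneg_right hAB (by positivity : (0:ℝ) ≤ n*(2*η*σ))
    linarith [h, hc]
  have hT2 : T ≤ n*σ^2/49 := by
    rcases eq_or_lt_of_le hT0 with h0 | h0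
    · rw [← h0]; positivity
    · have m1 := mul_self_le_mul_self hT0 hT1
      have m2 := mul_le_mul_of_nonneg_left hCS
        (by positivity : (0:ℝ) ≤ 16*n^2*η^2*σ^2)
      have k1 : T^2 ≤ 16*n^2*η^2*σ^2*(s*Q) := by linarith [m1, m2]
      have a1 := mul_le_mul_of_nonneg_left k1 (by positivity : (0:ℝ) ≤ n*κ)
      have a2 := mul_le_mul_of_nonneg_left hre
        (by positivity : (0:ℝ) ≤ 16*n^2*η^2*σ^2*s)
      have k2 : n*κ*T^2 ≤ 16*n^2*η^2*σ^2*s*T := by linarith [a1, a2]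
      have a3 := mul_le_mul_of_nonneg_left hsparse2
        (by positivity : (0:ℝ) ≤ n^2*σ^2*T/49)
      have k3 : n*κ*T^2 ≤ n^2*σ^2*κ*T/49 := by linarith [k2, a3]
      by_contra hcon
      push_neg at hcon
      have hpos : 0 < n*κ*T := by positivity
      have := mul_lt_mul_of_pos_left hcon hpos
      linarith [this, k3]
  refine ⟨?_, hT2⟩
  have kQ : κ*Q ≤ σ^2/49 := by
    have h := hre.trans hT2
    by_contra hcon
    push_neg at hcon
    have := mul_lt_mul_of_pos_left hcon hn'
    linarith [this, h]
  have kA := mul_le_mul_of_nonneg_left hCS hκ.le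
  have k5 : s*(κ*Q) ≤ s*(σ^2/49) := mul_le_mul_of_nonneg_left kQ hs0
  have k6 := mul_le_mul_of_nonneg_right hsparse2 (by positivity : (0:ℝ) ≤ σ^2/49)
  have kA2 : 784*η^2*(κ*A^2) ≤ κ*(σ^2/49) := by
    have h7 := mul_le_mul_of_nonneg_left (kA.trans (by linarith [k5] : κ*(s*Q) ≤ s*(σ^2/49)))
      (by positivity : (0:ℝ) ≤ 784*η^2)
    linarith [h7, k6]
  have hA2 : (196*η*A)^2 ≤ σ^2 := by
    by_contra hcon
    push_neg at hcon
    have := mul_lt_mul_of_pos_left hcon hκ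
    linarith [this, kA2]
  have hA3 : 196*η*A ≤ σ := by
    by_contra hcon
    push_neg at hcon
    have := mul_self_lt_mul_self hσ0 hcon
    linarith [this, hA2]
  rw [le_div_iff₀ (by positivity : (0:ℝ) < 98*η)]
  have h8 := mul_nonneg hη.le (sub_nonneg.mpr cone)
  linarith [hA3, h8]

private lemma stmt12_quad {a t : ℝ} (ha : 0 < a) (ht : 0 ≤ t)
    (h : t^2/2 ≤ 2*a^2 + a*t/49 + t^2/49) : t ≤ 5/2*a := by
  nlinarith [sq_nonneg (t - 5/2*a), mul_pos ha ha, mul_nonneg ha.le ht]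

private lemma stmt12_mul {c y x : ℝ} (hy : 0 ≤ y) (hx : 0 ≤ x) (hc : 0 ≤ c) :
    y * (c * x) ≤ 3 * c * y * x := by nlinarith [mul_nonneg (mul_nonneg hc hy) hx]

/-- Under the ADDS assumptions, the residual scale `σ̂ = n^{-1/2} ‖H - G b̃‖₂` satisfies `σ_*/√2 ≤ σ̂ ≤ 2 σ_*` and `‖n⁻¹ Gᵀ (H - G b̃)‖∞ ≤ 3 √2 η σ̂`. -/
theorem stmt12 {n p : ℕ} (hn : 0 < n)
    (G : Matrix (Fin n) (Fin p) ℝ) (bstar : Fin p → ℝ) (ε : Fin n → ℝ)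
    (H : Fin n → ℝ) (hH : H = G.mulVec bstar + ε)
    (η κ σstar : ℝ) (hη : 0 < η) (hκ : 0 < κ) (hσstar : 0 < σstar)
    (J : Finset (Fin p)) (hJ : ∀ i, i ∈ J ↔ bstar i ≠ 0)
    -- (i) bound on the noise correlation
    (hnoise : ‖(n : ℝ)⁻¹ • G.transpose.mulVec ε‖ ≤ η * σstar)
    -- (ii) the noise scale is proxied by σstar
    (hnoise2 : 3 * σstar ^ 2 / 4 ≤ (n : ℝ)⁻¹ * (∑ i, (ε i) ^ 2) ∧
      (n : ℝ)⁻¹ * (∑ i, (ε i) ^ 2) ≤ 2 * σstar ^ 2)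
    -- (iv) sparsity condition: 28 η √(s/κ) ≤ 1 with s = ‖bstar‖₀
    (hsparse : 28 * η * Real.sqrt ((J.card : ℝ) / κ) ≤ 1)
    -- (v) restricted eigenvalue condition with constant κ
    (hRE : ∀ J0 : Finset (Fin p), J0.card ≤ J.card →
      ∀ a : Fin p → ℝ, a ≠ 0 → (∑ i ∈ J0ᶜ, |a i|) ≤ (∑ i ∈ J0, |a i|) →
        (n : ℝ) * κ * (∑ i ∈ J0, (a i) ^ 2) ≤ ∑ i, (G.mulVec a i) ^ 2)
    -- the Dantzig-type solution path: bhat σ minimizes ‖b‖₁ subject to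
    -- ‖n⁻¹ Gᵀ (H - G b)‖∞ ≤ η σ
    (bhat : ℝ → Fin p → ℝ)
    (hbhat : ∀ σ : ℝ, 0 ≤ σ →
      ‖(n : ℝ)⁻¹ • G.transpose.mulVec (H - G.mulVec (bhat σ))‖ ≤ η * σ ∧
        ∀ b : Fin p → ℝ, ‖(n : ℝ)⁻¹ • G.transpose.mulVec (H - G.mulVec b)‖ ≤ η * σ →
          (∑ i, |bhat σ i|) ≤ ∑ i, |b i|)
    -- σtilde is the largest σ ≥ 0 with ‖H - G (bhat σ)‖₂² ≥ n σ²/2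
    (σtilde : ℝ) (hσtilde0 : 0 ≤ σtilde)
    (hσtilde1 : (n : ℝ) * σtilde ^ 2 / 2 ≤ ∑ i, (H i - G.mulVec (bhat σtilde) i) ^ 2)
    (hσtilde2 : ∀ σ : ℝ, 0 ≤ σ →
      (n : ℝ) * σ ^ 2 / 2 ≤ (∑ i, (H i - G.mulVec (bhat σ) i) ^ 2) → σ ≤ σtilde) :
    σstar / Real.sqrt 2 ≤ (n : ℝ)⁻¹ ^ ((1 : ℝ)/2) * Real.sqrt (∑ i, (H i - G.mulVec (bhat σtilde) i) ^ 2) ∧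
    (n : ℝ)⁻¹ ^ ((1 : ℝ)/2) * Real.sqrt (∑ i, (H i - G.mulVec (bhat σtilde) i) ^ 2) ≤ 2 * σstar ∧
    ‖(n : ℝ)⁻¹ • G.transpose.mulVec (H - G.mulVec (bhat σtilde))‖ ≤
      3 * Real.sqrt 2 * η *
        ((n : ℝ)⁻¹ ^ ((1 : ℝ)/2) * Real.sqrt (∑ i, (H i - G.mulVec (bhat σtilde) i) ^ 2)) := by
  have hn' : (0:ℝ) < n := by exact_mod_cast hn
  have hn0 : ((n:ℝ)) ≠ 0 := hn'.ne'
  set s : ℝ := (J.card : ℝ) with hs_def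
  have hs0 : (0:ℝ) ≤ s := Nat.cast_nonneg _
  -- squared sparsity condition : 784 η² s ≤ κ
  have hsparse2 : 784 * η^2 * s ≤ κ := by
    have h0 : (0:ℝ) ≤ s/κ := div_nonneg hs0 hκ.le
    have h1 : Real.sqrt (s/κ) ^ 2 = s/κ := Real.sq_sqrt h0
    have h2 : (0:ℝ) ≤ Real.sqrt (s/κ) := Real.sqrt_nonneg _
    have h3 : 784 * η^2 * (s/κ) ≤ 1 := by
      nlinarith [mul_le_mul hsparse hsparse (by positivity : (0:ℝ) ≤ 28*η*Real.sqrt (s/κ))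
        zero_le_one, h1]
    calc 784 * η^2 * s = (784 * η^2 * (s/κ)) * κ := by field_simp
      _ ≤ 1 * κ := mul_le_mul_of_nonneg_right h3 hκ.le
      _ = κ := one_mul κ
  -- entrywise bound extracted from a sup-norm bound
  have pinorm : ∀ (v : Fin p → ℝ) (c : ℝ), ‖(n:ℝ)⁻¹ • v‖ ≤ c → ∀ j, |v j| ≤ (n:ℝ) * c := by
    intro v c h j
    have h1 : ‖((n:ℝ)⁻¹ • v) j‖ ≤ c := (norm_le_pi_norm ((n:ℝ)⁻¹ • v) j).trans h
    have h2 : (n:ℝ)⁻¹ * |v j| ≤ c := by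
      simpa [Real.norm_eq_abs, abs_mul,
        abs_of_nonneg (by positivity : (0:ℝ) ≤ (n:ℝ)⁻¹)] using h1
    have h3 := mul_le_mul_of_nonneg_left h2 hn'.le
    rwa [← mul_assoc, mul_inv_cancel₀ hn0, one_mul] at h3
  -- dot product bound
  have dotbound : ∀ (v w : Fin p → ℝ) (c : ℝ), 0 ≤ c → (∀ j, |w j| ≤ c) →
      |∑ j, v j * w j| ≤ (∑ j, |v j|) * c := by
    intro v w c hc hw
    calc |∑ j, v j * w j| ≤ ∑ j, |v j * w j| := Finset.abs_sum_le_sum_abs _ _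
      _ = ∑ j, |v j| * |w j| := by simp [abs_mul]
      _ ≤ ∑ j, |v j| * c :=
          Finset.sum_le_sum fun j _ => mul_le_mul_of_nonneg_left (hw j) (abs_nonneg _)
      _ = (∑ j, |v j|) * c := by rw [← Finset.sum_mul]
  -- the key deterministic lemma, for any σ ≥ σstar
  have key : ∀ σ : ℝ, σstar ≤ σ →
      (∑ j, |(bhat σ - bstar) j|) ≤ σ / (98 * η) ∧
      (∑ i, (G.mulVec (bhat σ - bstar) i)^2) ≤ (n:ℝ) * σ^2 / 49 := by
    intro σ hσ
    have hσ0 : (0:ℝ) ≤ σ := hσstar.le.trans hσ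
    set Δ : Fin p → ℝ := bhat σ - bstar with hΔ_def
    have hεH : H - G.mulVec bstar = ε := by rw [hH]; abel
    have hfeas : ‖(n:ℝ)⁻¹ • G.transpose.mulVec (H - G.mulVec bstar)‖ ≤ η * σ := by
      rw [hεH]; exact hnoise.trans (mul_le_mul_of_nonneg_left hσ hη.le)
    have hopt := (hbhat σ hσ0).2 bstar hfeas
    have hfeas2 := (hbhat σ hσ0).1
    have hb0 : ∀ i ∈ Jᶜ, bstar i = 0 := by
      intro i hi
      by_contra h
      exact (Finset.mem_compl.mp hi) ((hJ i).mpr h)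
    set A := ∑ i ∈ J, |Δ i| with hA_def
    set B := ∑ i ∈ Jᶜ, |Δ i| with hB_def
    have hA0 : 0 ≤ A := Finset.sum_nonneg fun i _ => abs_nonneg _
    have hB0 : 0 ≤ B := Finset.sum_nonneg fun i _ => abs_nonneg _
    have hsumΔ : (∑ j, |Δ j|) = A + B := (Finset.sum_add_sum_compl J _).symm
    -- cone condition
    have cone : B ≤ A := by
      have e1 : ∑ i ∈ J, |bhat σ i| + ∑ i ∈ Jᶜ, |bhat σ i| = ∑ i, |bhat σ i| :=
        Finset.sum_add_sum_compl J _
      have e2 : ∑ i ∈ Jᶜ, |bstar i| = 0 :=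
        Finset.sum_eq_zero fun i hi => by rw [hb0 i hi, abs_zero]
      have e2' : ∑ i ∈ J, |bstar i| + ∑ i ∈ Jᶜ, |bstar i| = ∑ i, |bstar i| :=
        Finset.sum_add_sum_compl J _
      have e3 : ∑ i ∈ Jᶜ, |bhat σ i| = B := by
        apply Finset.sum_congr rfl
        intro i hi
        have : Δ i = bhat σ i - bstar i := rfl
        rw [this, hb0 i hi, sub_zero]
      have e4 : ∑ i ∈ J, |bstar i| - A ≤ ∑ i ∈ J, |bhat σ i| := by
        rw [hA_def, ← Finset.sum_sub_distrib]
        apply Finset.sum_le_sum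
        intro i _
        have h := abs_add_le (bhat σ i) (-(Δ i))
        rw [abs_neg] at h
        have heq : bhat σ i + -(Δ i) = bstar i := by
          have : Δ i = bhat σ i - bstar i := rfl
          rw [this]; ring
        rw [heq] at h
        linarith
      linarith [hopt]
    -- infinity-norm bound on Gᵀ G Δ
    have hGΔ : G.transpose.mulVec (G.mulVec Δ) =
        G.transpose.mulVec (H - G.mulVec bstar) - G.transpose.mulVec (H - G.mulVec (bhat σ)) := by
      rw [← Matrix.mulVec_sub]
      congr 1
      rw [hΔ_def, Matrix.mulVec_sub]
      abel
    have hwn : ‖(n:ℝ)⁻¹ • G.transpose.mulVec (G.mulVec Δ)‖ ≤ 2*η*σ := by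
      rw [hGΔ, smul_sub]
      calc ‖(n:ℝ)⁻¹ • G.transpose.mulVec (H - G.mulVec bstar) -
            (n:ℝ)⁻¹ • G.transpose.mulVec (H - G.mulVec (bhat σ))‖
          ≤ ‖(n:ℝ)⁻¹ • G.transpose.mulVec (H - G.mulVec bstar)‖ +
            ‖(n:ℝ)⁻¹ • G.transpose.mulVec (H - G.mulVec (bhat σ))‖ := norm_sub_le _ _
        _ ≤ η*σ + η*σ := add_le_add hfeas hfeas2
        _ = 2*η*σ := by ring
    have winf : ∀ j, |(G.transpose.mulVec (G.mulVec Δ)) j| ≤ (n:ℝ) * (2*η*σ) :=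
      pinorm _ _ hwn
    set T := ∑ i, (G.mulVec Δ i)^2 with hT_def
    have hT0 : 0 ≤ T := Finset.sum_nonneg fun i _ => sq_nonneg _
    -- T = Δ ⬝ (Gᵀ G Δ)
    have hTeq : T = ∑ j, Δ j * (G.transpose.mulVec (G.mulVec Δ)) j := by
      have h1 : Δ ⬝ᵥ (Gᵀ *ᵥ (G *ᵥ Δ)) = (Δ ᵥ* Gᵀ) ⬝ᵥ (G *ᵥ Δ) :=
        Matrix.dotProduct_mulVec _ _ _
      rw [Matrix.vecMul_transpose] at h1
      have h2 : (G *ᵥ Δ) ⬝ᵥ (G *ᵥ Δ) = T := by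
        simp [dotProduct, hT_def, pow_two]
      rw [h2] at h1
      rw [← h1]
      rfl
    have hc : T ≤ ((A + B) * ((n:ℝ) * (2*η*σ))) := by
      rw [hTeq]
      calc ∑ j, Δ j * (G.transpose.mulVec (G.mulVec Δ)) j
          ≤ |∑ j, Δ j * (G.transpose.mulVec (G.mulVec Δ)) j| := le_abs_self _
        _ ≤ (∑ j, |Δ j|) * ((n:ℝ) * (2*η*σ)) := dotbound _ _ _ (by positivity) winf
        _ = (A + B) * ((n:ℝ) * (2*η*σ)) := by rw [hsumΔ]
    by_cases hΔ0 : Δ = 0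
    · constructor
      · rw [hΔ0]; simp
        exact div_nonneg hσ0 (by positivity)
      · rw [hT_def, hΔ0]; simp
        positivity
    · have hre := hRE J le_rfl Δ hΔ0 cone
      set Q := ∑ i ∈ J, (Δ i)^2 with hQ_def
      have hQ0 : 0 ≤ Q := Finset.sum_nonneg fun i _ => sq_nonneg _
      have hCS : A^2 ≤ s * Q := by
        have h := sq_sum_le_card_mul_sum_sq (s := J) (f := fun i => |Δ i|)
        simpa [sq_abs, hA_def, hQ_def, hs_def] using h
      have := stmt12_arith hn' hκ hη hσ0 hA0 hB0 hT0 hQ0 hs0 cone hc hCS hre hsparse2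
      rw [hsumΔ]
      exact this
  -- residual expansion
  have hpt : ∀ σ : ℝ, ∀ i, H i - G.mulVec (bhat σ) i = ε i - G.mulVec (bhat σ - bstar) i := by
    intro σ i
    rw [Matrix.mulVec_sub, hH]
    simp [Pi.add_apply, Pi.sub_apply]
    ring
  have hsum : ∀ σ : ℝ, ∑ i, (H i - G.mulVec (bhat σ) i)^2 =
      (∑ i, (ε i)^2) - 2*(∑ i, ε i * G.mulVec (bhat σ - bstar) i) +
        ∑ i, (G.mulVec (bhat σ - bstar) i)^2 := by
    intro σ
    calc ∑ i, (H i - G.mulVec (bhat σ) i)^2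
        = ∑ i, ((ε i)^2 - 2*(ε i * G.mulVec (bhat σ - bstar) i) +
            (G.mulVec (bhat σ - bstar) i)^2) :=
          Finset.sum_congr rfl fun i _ => by rw [hpt σ i]; ring
      _ = _ := by
          rw [Finset.sum_add_distrib, Finset.sum_sub_distrib, ← Finset.mul_sum]
  -- cross term bound
  have cross : ∀ σ : ℝ, σstar ≤ σ →
      |∑ i, ε i * G.mulVec (bhat σ - bstar) i| ≤ (σ/(98*η)) * ((n:ℝ)*(η*σstar)) := by
    intro σ hσ
    have h1 : ∑ i, ε i * G.mulVec (bhat σ - bstar) i =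
        ∑ j, (bhat σ - bstar) j * (G.transpose.mulVec ε) j := by
      have h := Matrix.dotProduct_mulVec ε G (bhat σ - bstar)
      rw [← Matrix.mulVec_transpose] at h
      calc ∑ i, ε i * G.mulVec (bhat σ - bstar) i
          = ε ⬝ᵥ (G *ᵥ (bhat σ - bstar)) := rfl
        _ = (Gᵀ *ᵥ ε) ⬝ᵥ (bhat σ - bstar) := h
        _ = ∑ j, (bhat σ - bstar) j * (G.transpose.mulVec ε) j := by
            simp [dotProduct, mul_comm]
    rw [h1]
    have h2 : |∑ j, (bhat σ - bstar) j * (G.transpose.mulVec ε) j| ≤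
        (∑ j, |(bhat σ - bstar) j|) * ((n:ℝ)*(η*σstar)) :=
      dotbound _ _ _ (by positivity) (pinorm _ _ hnoise)
    exact h2.trans (mul_le_mul_of_nonneg_right (key σ hσ).1 (by positivity))
  have hcrval : ∀ σ : ℝ, (σ/(98*η)) * ((n:ℝ)*(η*σstar)) = (n:ℝ)*σstar*σ/98 := by
    intro σ; field_simp
  -- lower bound for ε energy
  have hε2lo : (n:ℝ) * (3*σstar^2/4) ≤ ∑ i, (ε i)^2 := by
    have h := mul_le_mul_of_nonneg_left hnoise2.1 hn'.le
    rwa [← mul_assoc, mul_inv_cancel₀ hn0, one_mul] at h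
  have hε2hi : ∑ i, (ε i)^2 ≤ (n:ℝ) * (2*σstar^2) := by
    have h := mul_le_mul_of_nonneg_left hnoise2.2 hn'.le
    rwa [← mul_assoc, mul_inv_cancel₀ hn0, one_mul] at h
  -- Step A : σstar ≤ σtilde
  have hstarup : σstar ≤ σtilde := by
    apply hσtilde2 σstar hσstar.le
    have hcr : |∑ i, ε i * G.mulVec (bhat σstar - bstar) i| ≤ (n:ℝ)*σstar*σstar/98 := by
      have := cross σstar le_rfl
      rwa [hcrval] at this
    have hcr' : ∑ i, ε i * G.mulVec (bhat σstar - bstar) i ≤ (n:ℝ)*σstar*σstar/98 :=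
      (le_abs_self _).trans hcr
    have hT : (0:ℝ) ≤ ∑ i, (G.mulVec (bhat σstar - bstar) i)^2 :=
      Finset.sum_nonneg fun i _ => sq_nonneg _
    rw [hsum σstar]
    linarith [hε2lo, hcr', hT, mul_nonneg hn'.le (sq_nonneg σstar)]
  -- Step B : σtilde ≤ (5/2) σstar and the upper residual bound
  have hcrt : ∑ i, ε i * G.mulVec (bhat σtilde - bstar) i ≥ -((n:ℝ)*σstar*σtilde/98) := by
    have := cross σtilde hstarup
    rw [hcrval] at this
    linarith [abs_le.mp this |>.1]
  have hTt : ∑ i, (G.mulVec (bhat σtilde - bstar) i)^2 ≤ (n:ℝ)*σtilde^2/49 :=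
    (key σtilde hstarup).2
  have hup : σtilde ≤ 5/2*σstar := by
    have h1 : (n:ℝ) * σtilde^2/2 ≤ (n:ℝ)*(2*σstar^2) + (n:ℝ)*σstar*σtilde/49 +
        (n:ℝ)*σtilde^2/49 := by
      have := hσtilde1
      rw [hsum σtilde] at this
      linarith
    have h2 : σtilde^2/2 ≤ 2*σstar^2 + σstar*σtilde/49 + σtilde^2/49 := by
      by_contra hcon
      push_neg at hcon
      have := mul_lt_mul_of_pos_left hcon hn'
      linarith [this, h1]
    exact stmt12_quad hσstar hσtilde0 h2
  have hup2 : ∑ i, (H i - G.mulVec (bhat σtilde) i)^2 ≤ 4*(n:ℝ)*σstar^2 := by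
    rw [hsum σtilde]
    have hsq : σtilde^2 ≤ 25/4*σstar^2 := by
      have := mul_self_le_mul_self hσtilde0 hup
      linarith [this]
    have hsq2 : (n:ℝ)*σtilde^2 ≤ (n:ℝ)*(25/4*σstar^2) :=
      mul_le_mul_of_nonneg_left hsq hn'.le
    have hst : σstar*σtilde ≤ 5/2*σstar^2 := by
      have := mul_le_mul_of_nonneg_left hup hσstar.le
      linarith [this]
    have hst2 : (n:ℝ)*(σstar*σtilde) ≤ (n:ℝ)*(5/2*σstar^2) :=
      mul_le_mul_of_nonneg_left hst hn'.le
    linarith [hε2hi, hcrt, hTt, hsq2, hst2]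
  -- final assembly
  set S := ∑ i, (H i - G.mulVec (bhat σtilde) i)^2 with hS_def
  clear_value S
  have hS0 : (0:ℝ) ≤ S := le_trans (by positivity) hσtilde1
  have hrw : (n:ℝ)⁻¹ ^ ((1:ℝ)/2) * Real.sqrt S = Real.sqrt ((n:ℝ)⁻¹ * S) := by
    rw [← Real.sqrt_eq_rpow, Real.sqrt_mul (by positivity)]
  have hinvS1 : σstar^2/2 ≤ (n:ℝ)⁻¹ * S := by
    have h1 : (n:ℝ)*σstar^2/2 ≤ S := by
      have ha := mul_self_le_mul_self hσstar.le hstarup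
      have hb := mul_le_mul_of_nonneg_left ha hn'.le
      linarith [hσtilde1, hb]
    have h2 := mul_le_mul_of_nonneg_left h1 (by positivity : (0:ℝ) ≤ (n:ℝ)⁻¹)
    calc σstar^2/2 = (n:ℝ)⁻¹ * ((n:ℝ)*σstar^2/2) := by field_simp
      _ ≤ (n:ℝ)⁻¹ * S := h2
  have hinvS2 : (n:ℝ)⁻¹ * S ≤ 4*σstar^2 := by
    have h2 := mul_le_mul_of_nonneg_left hup2 (by positivity : (0:ℝ) ≤ (n:ℝ)⁻¹)
    calc (n:ℝ)⁻¹ * S ≤ (n:ℝ)⁻¹ * (4*(n:ℝ)*σstar^2) := h2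
      _ = 4*σstar^2 := by field_simp
  have hinvS3 : σtilde^2 ≤ 2*((n:ℝ)⁻¹ * S) := by
    have h1 : (n:ℝ)*σtilde^2/2 ≤ S := hσtilde1
    have h2 := mul_le_mul_of_nonneg_left h1 (by positivity : (0:ℝ) ≤ (n:ℝ)⁻¹)
    have h3 : (n:ℝ)⁻¹ * ((n:ℝ)*σtilde^2/2) = σtilde^2/2 := by field_simp
    rw [h3] at h2
    linarith
  refine ⟨?_, ?_, ?_⟩
  · rw [hrw]
    calc σstar / Real.sqrt 2 = Real.sqrt (σstar^2/2) := by
          rw [Real.sqrt_div (sq_nonneg _), Real.sqrt_sq hσstar.le]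
      _ ≤ Real.sqrt ((n:ℝ)⁻¹ * S) := Real.sqrt_le_sqrt hinvS1
  · rw [hrw]
    calc Real.sqrt ((n:ℝ)⁻¹ * S) ≤ Real.sqrt (4*σstar^2) := Real.sqrt_le_sqrt hinvS2
      _ = 2*σstar := by
          rw [show (4:ℝ)*σstar^2 = (2*σstar)^2 by ring, Real.sqrt_sq (by positivity)]
  · rw [hrw]
    have h1 : ‖(n:ℝ)⁻¹ • G.transpose.mulVec (H - G.mulVec (bhat σtilde))‖ ≤ η * σtilde :=
      (hbhat σtilde hσtilde0).1
    have h2 : σtilde ≤ Real.sqrt 2 * Real.sqrt ((n:ℝ)⁻¹ * S) := by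
      rw [← Real.sqrt_mul (by norm_num : (0:ℝ) ≤ 2)]
      calc σtilde = Real.sqrt (σtilde^2) := (Real.sqrt_sq hσtilde0).symm
        _ ≤ Real.sqrt (2*((n:ℝ)⁻¹*S)) := Real.sqrt_le_sqrt hinvS3
    have hX : (0:ℝ) ≤ Real.sqrt ((n:ℝ)⁻¹ * S) := Real.sqrt_nonneg _
    calc ‖(n:ℝ)⁻¹ • G.transpose.mulVec (H - G.mulVec (bhat σtilde))‖
        ≤ η * σtilde := h1
      _ ≤ η * (Real.sqrt 2 * Real.sqrt ((n:ℝ)⁻¹ * S)) :=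
          mul_le_mul_of_nonneg_left h2 hη.le
      _ ≤ 3 * Real.sqrt 2 * η * Real.sqrt ((n:ℝ)⁻¹ * S) :=
          stmt12_mul hη.le hX (Real.sqrt_nonneg 2)
end
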